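/- arXiv:1212.4099 — 2 statements merged into one kernel-verified Lean document; each statement's English description precedes it below -/
import Mathlib

section
/- Let (X, 𝒜, μ, T) be an exact (hence ergodic) measure-preserving system on a σ-finite measure space with μ(X) = ∞ and 𝒜 nontrivial mod μ. Then for every f ∈ L¹(μ) ∩ L^∞(μ) and every g ∈ L¹(μ), lim_{n→∞} ∫_X (f∘Tⁿ)·g dμ = 0. In particular, for all sets A, B of finite measure, μ(T⁻ⁿA ∩ B) → 0 (T is of zero type). -/
/-!
For `f, g ∈ L²` the correlation `∫ (f ∘ Tⁿ) g` is the inner product of `g` with `f ∘ Tⁿ`, which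
lies in `L²(T⁻ⁿ𝒜)`. These subspaces decrease, and a function in all of them has level sets
`{|h| ≥ ε}` in the tail σ-algebra modulo `μ`; they have finite measure, so by exactness and
`μ(X) = ∞` they are null, and the intersection of the subspaces is `0`. Hence the projections of
`g` onto `L²(T⁻ⁿ𝒜)` tend to `0`, and with them the correlations. For `g ∈ L¹` one approximates `g`
by its truncations, which lie in `L²`; as `f` is bounded, the error is uniform in `n`.
-/

open MeasureTheory Filter Topology ProbabilityTheory

theorem tendstoUniformly_of_dist_le {ι α β : Type*} [PseudoMetricSpace β] {F : ι → α → β}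
    {f : α → β} {p : Filter ι} {a : ι → ℝ} (ha : Tendsto a p (𝓝 0))
    (h : ∀ i x, dist (f x) (F i x) ≤ a i) : TendstoUniformly F f p := by
  rw [Metric.tendstoUniformly_iff]
  intro ε hε
  filter_upwards [ha.eventually (gt_mem_nhds hε)] with i hi x
  exact (h i x).trans_lt hi

section Hilbert

variable {H : Type*} [NormedAddCommGroup H] [InnerProductSpace ℝ H] [CompleteSpace H]

theorem tendsto_inner_of_mem_antitone (V : ℕ → Submodule ℝ H)
    [∀ n, (V n).HasOrthogonalProjection] (hV : Antitone V) (hV_bot : ⨅ n, V n = ⊥)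
    {u : ℕ → H} {C : ℝ} (hu : ∀ n, ‖u n‖ ≤ C) (huV : ∀ n, u n ∈ V n) (g : H) :
    Tendsto (fun n => inner ℝ (u n) g) atTop (𝓝 0) := by
  have hdense : ⊤ ≤ (⨆ n, (V n)ᗮ).topologicalClosure := by
    rw [← Submodule.orthogonal_orthogonal_eq_closure, ← Submodule.iInf_orthogonal]
    simp [Submodule.orthogonal_orthogonal, hV_bot]
  have hproj : Tendsto (fun n => (V n).starProjection g) atTop (𝓝 0) := by
    simpa using (tendsto_const_nhds (x := g)).sub <| Submodule.starProjection_tendsto_self _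
      (fun _ _ hmn => Submodule.orthogonal_le (hV hmn)) g hdense
  refine squeeze_zero_norm (fun n => ?_) (by simpa using hproj.norm.const_mul C)
  calc ‖inner ℝ (u n) g‖ = ‖inner ℝ (u n) ((V n).starProjection g)‖ := by
        rw [← Submodule.inner_starProjection_left_eq_right,
          Submodule.starProjection_eq_self_iff.2 (huV n)]
    _ ≤ ‖u n‖ * ‖(V n).starProjection g‖ := norm_inner_le_norm _ _
    _ ≤ C * ‖(V n).starProjection g‖ := by gcongr; exact hu n

end Hilbert

section IntegrableBounded

variable {X : Type*} [MeasurableSpace X] {μ : Measure X}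

theorem MeasureTheory.Integrable.memLp_two_of_abs_le {f : X → ℝ} (hf : Integrable f μ) {C : ℝ}
    (hC : ∀ᵐ x ∂μ, |f x| ≤ C) : MemLp f 2 μ :=
  (memLp_two_iff_integrable_sq hf.1).2 <| by
    simpa [sq] using hf.bdd_mul (f := f) hf.1 (by simpa using hC)

theorem abs_integral_mul_sub_integral_mul_le {F g b : X → ℝ} {C : ℝ}
    (hF : AEStronglyMeasurable F μ) (hFC : ∀ x, |F x| ≤ C) (hg : Integrable g μ)
    (hb : Integrable b μ) :
    |∫ x, F x * g x ∂μ - ∫ x, F x * b x ∂μ| ≤ C * ∫ x, |g x - b x| ∂μ := by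
  have hFC' : ∀ᵐ x ∂μ, ‖F x‖ ≤ C := ae_of_all _ hFC
  rw [← integral_sub (hg.bdd_mul hF hFC') (hb.bdd_mul hF hFC'), ← integral_const_mul]
  refine (Real.norm_eq_abs _).symm.trans_le <|
    norm_integral_le_of_norm_le ((hg.sub hb).abs.const_mul C) (ae_of_all _ fun x => ?_)
  rw [Real.norm_eq_abs, ← mul_sub, abs_mul]
  exact mul_le_mul_of_nonneg_right (hFC x) (abs_nonneg _)

theorem MeasureTheory.Integrable.tendsto_integral_abs_sub_truncation {g : X → ℝ}
    (hg : Integrable g μ) :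
    Tendsto (fun k : ℕ => ∫ x, |g x - truncation g k x| ∂μ) atTop (𝓝 0) := by
  rw [← integral_zero X ℝ (μ := μ)]
  refine tendsto_integral_of_dominated_convergence (fun x => 2 * |g x|)
    (fun k => (hg.1.sub hg.1.truncation).norm) (hg.abs.const_mul 2) (fun k => ?_) ?_
  · refine ae_of_all _ fun x => ?_
    rw [Real.norm_eq_abs, abs_abs, two_mul]
    exact (abs_sub _ _).trans (add_le_add le_rfl (abs_truncation_le_abs_self _ _ _))
  · refine ae_of_all _ fun x => tendsto_const_nhds.congr' ?_
    filter_upwards [(tendsto_natCast_atTop_atTop (R := ℝ)).eventually_gt_atTop |g x|] with k hk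
    rw [truncation_eq_self hk, sub_self, abs_zero]

end IntegrableBounded

section Exact

variable {X : Type*} [m : MeasurableSpace X] {μ : Measure X} {T : X → X}

/-- Exactness: the tail σ-algebra `⋂ₙ T⁻ⁿ𝒜` is trivial modulo `μ`. -/
def IsExact (μ : Measure X) (T : X → X) : Prop :=
  ∀ A : Set X, (∀ n : ℕ, MeasurableSet[MeasurableSpace.comap (T^[n]) m] A) →
    μ A = 0 ∨ μ Aᶜ = 0

theorem antitone_comap_iterate (hT : Measurable T) :
    Antitone fun n : ℕ => MeasurableSpace.comap (T^[n]) m := by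
  intro a b hab
  obtain ⟨k, rfl⟩ := Nat.exists_eq_add_of_le' hab
  show MeasurableSpace.comap (T^[k + a]) m ≤ MeasurableSpace.comap (T^[a]) m
  rw [Function.iterate_add, ← MeasurableSpace.comap_comp]
  exact MeasurableSpace.comap_mono (hT.iterate k).comap_le

-- a set that is `T⁻ⁿ𝒜`-measurable mod `μ` for every `n` is a.e. equal to the limsup of its
-- representatives, which lies in the tail σ-algebra itself
theorem IsExact.measure_eq_zero_or_compl_of_ae_eq (hexact : IsExact μ T) (hT : Measurable T)
    {S : Set X} (hS : ∀ n, ∃ S' : Set X,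
      MeasurableSet[MeasurableSpace.comap (T^[n]) m] S' ∧ S' =ᵐ[μ] S) :
    μ S = 0 ∨ μ Sᶜ = 0 := by
  choose S' hS'm hS'ae using hS
  have hL : limsup (α := Set X) S' atTop =ᵐ[μ] S := limsup_ae_eq_of_forall_ae_eq S' hS'ae
  rw [← measure_congr hL, ← measure_congr hL.compl]
  refine hexact _ fun n => ?_
  rw [← limsup_nat_add S' n]
  exact @MeasurableSet.measurableSet_limsup _ (MeasurableSpace.comap (T^[n]) m) _
    fun i => antitone_comap_iterate hT (Nat.le_add_left n i) _ (hS'm (i + n))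

theorem IsExact.measure_eq_zero_of_ae_eq (hexact : IsExact μ T) (hT : Measurable T)
    (hinf : μ Set.univ = ⊤) {S : Set X} (hS_fin : μ S ≠ ⊤) (hS : ∀ n, ∃ S' : Set X,
      MeasurableSet[MeasurableSpace.comap (T^[n]) m] S' ∧ S' =ᵐ[μ] S) :
    μ S = 0 := by
  refine (hexact.measure_eq_zero_or_compl_of_ae_eq hT hS).resolve_right fun hSc => ?_
  have : μ Set.univ ≤ μ S + μ Sᶜ := by
    rw [← Set.union_compl_self S]
    exact measure_union_le S Sᶜ
  rw [hinf, hSc, add_zero, top_le_iff] at this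
  exact hS_fin this

theorem IsExact.ae_eq_zero_of_memLp (hexact : IsExact μ T) (hT : Measurable T)
    (hinf : μ Set.univ = ⊤) {p : ENNReal} (hp0 : p ≠ 0) (hp : p ≠ ⊤) {h : X → ℝ}
    (hh : MemLp h p μ)
    (h_comp : ∀ n, ∃ w : X → ℝ, Measurable w ∧ w ∘ T^[n] =ᵐ[μ] h) :
    h =ᵐ[μ] 0 := by
  have hlevel : ∀ ε : NNReal, ε ≠ 0 → μ {x | ε ≤ ‖h x‖₊} = 0 := by
    intro ε hε
    refine hexact.measure_eq_zero_of_ae_eq hT hinf (hh.meas_ge_lt_top hp0 hp hε).ne fun n => ?_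
    obtain ⟨w, hw, hwh⟩ := h_comp n
    refine ⟨T^[n] ⁻¹' {y | ε ≤ ‖w y‖₊},
      ⟨_, measurableSet_le measurable_const hw.nnnorm, rfl⟩, ?_⟩
    filter_upwards [hwh] with x hx
    change (ε ≤ ‖w (T^[n] x)‖₊) = (ε ≤ ‖h x‖₊)
    rw [← hx, Function.comp_apply]
  have hnz : {x | h x ≠ 0} ⊆ ⋃ k : ℕ, {x | ((k : NNReal) + 1)⁻¹ ≤ ‖h x‖₊} := by
    intro x hx
    obtain ⟨k, hk⟩ := exists_nat_one_div_lt (nnnorm_pos.2 hx)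
    exact Set.mem_iUnion.2 ⟨k, by simpa using hk.le⟩
  exact measure_mono_null hnz (measure_iUnion_null fun k => hlevel _ (by positivity))

end Exact

section Koopman

variable {X : Type*} [MeasurableSpace X] {μ : Measure X} {T : X → X}

/-- `L²(T⁻ⁿ𝒜)`, realised as the range of the Koopman operator `φ ↦ φ ∘ Tⁿ`. -/
noncomputable def koopmanRange (hT : MeasurePreserving T μ μ) (n : ℕ) :
    Submodule ℝ (Lp ℝ 2 μ) :=
  LinearMap.range (Lp.compMeasurePreservingₗ ℝ (T^[n]) (hT.iterate n))

variable (hT : MeasurePreserving T μ μ)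

theorem compMeasurePreserving_iterate_mem_koopmanRange (n : ℕ) (φ : Lp ℝ 2 μ) :
    Lp.compMeasurePreserving (T^[n]) (hT.iterate n) φ ∈ koopmanRange hT n :=
  ⟨φ, rfl⟩

instance (n : ℕ) : (koopmanRange hT n).HasOrthogonalProjection := by
  have : CompleteSpace (koopmanRange hT n) :=
    ((Lp.isometry_compMeasurePreserving (hT.iterate n)).isUniformInducing.isComplete_range
      ).completeSpace_coe
  infer_instance

theorem antitone_koopmanRange : Antitone (koopmanRange hT) := by
  intro a b hab
  obtain ⟨k, rfl⟩ := Nat.exists_eq_add_of_le' hab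
  rintro _ ⟨φ, rfl⟩
  refine ⟨Lp.compMeasurePreserving (T^[k]) (hT.iterate k) φ, ?_⟩
  simp only [Function.iterate_add]
  exact (Lp.compMeasurePreserving_comp_apply φ (hT.iterate k) (hT.iterate a)).symm

theorem IsExact.iInf_koopmanRange (hexact : IsExact μ T) (hinf : μ Set.univ = ⊤) :
    ⨅ n, koopmanRange hT n = ⊥ := by
  refine (Submodule.eq_bot_iff _).2 fun φ hφ => Lp.ext ?_
  refine (hexact.ae_eq_zero_of_memLp hT.measurable hinf two_ne_zero ENNReal.ofNat_ne_top
    (Lp.memLp φ) fun n => ?_).trans (Lp.coeFn_zero ℝ 2 μ).symm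
  obtain ⟨ψ, hψ⟩ := Submodule.mem_iInf _ |>.1 hφ n
  refine ⟨ψ, (Lp.stronglyMeasurable ψ).measurable, ?_⟩
  rw [← hψ]
  exact (Lp.coeFn_compMeasurePreserving ψ (hT.iterate n)).symm

end Koopman

section Correlation

variable {X : Type*} [MeasurableSpace X] {μ : Measure X} {T : X → X}

theorem IsExact.tendsto_integral_comp_iterate_mul_of_memLp (hexact : IsExact μ T)
    (hT : MeasurePreserving T μ μ) (hinf : μ Set.univ = ⊤) {f g : X → ℝ} (hf : MemLp f 2 μ)
    (hg : MemLp g 2 μ) :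
    Tendsto (fun n => ∫ x, f (T^[n] x) * g x ∂μ) atTop (𝓝 0) := by
  refine (tendsto_inner_of_mem_antitone _ (antitone_koopmanRange hT)
    (hexact.iInf_koopmanRange hT hinf) (fun n => (Lp.norm_compMeasurePreserving _ _).le)
    (fun n => compMeasurePreserving_iterate_mem_koopmanRange hT n (hf.toLp f))
    (hg.toLp g)).congr fun n => ?_
  rw [L2.inner_def]
  refine integral_congr_ae ?_
  filter_upwards [(Lp.coeFn_compMeasurePreserving _ (hT.iterate n)).trans
    ((hT.iterate n).quasiMeasurePreserving.ae_eq_comp hf.coeFn_toLp), hg.coeFn_toLp]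
    with x hfx hgx
  rw [hfx, hgx, Function.comp_apply, RCLike.inner_apply, conj_trivial, mul_comm]

end Correlation

section ZeroType

variable {X : Type*} [MeasurableSpace X] {μ : Measure X} {T : X → X}

theorem IsExact.tendsto_integral_comp_iterate_mul (hexact : IsExact μ T)
    (hT : MeasurePreserving T μ μ) (hinf : μ Set.univ = ⊤) {f g : X → ℝ}
    (hf : Integrable f μ) {C : ℝ} (hC : ∀ x, |f x| ≤ C) (hg : Integrable g μ) :
    Tendsto (fun n => ∫ x, f (T^[n] x) * g x ∂μ) atTop (𝓝 0) := by
  have hf2 : MemLp f 2 μ := hf.memLp_two_of_abs_le (ae_of_all _ hC)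
  have htrunc : ∀ k : ℕ, Integrable (truncation g k) μ := fun k =>
    hg.mono hg.1.truncation (ae_of_all _ fun x => by
      simpa using abs_truncation_le_abs_self g k x)
  have hunif : TendstoUniformly (fun (k : ℕ) n => ∫ x, f (T^[n] x) * truncation g k x ∂μ)
      (fun n => ∫ x, f (T^[n] x) * g x ∂μ) atTop := by
    refine tendstoUniformly_of_dist_le (by simpa using
      hg.tendsto_integral_abs_sub_truncation.const_mul C) fun k n => ?_
    exact abs_integral_mul_sub_integral_mul_le
      (hf.1.comp_measurePreserving (hT.iterate n)) (fun x => hC _) hg (htrunc k)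
  refine hunif.tendsto_of_eventually_tendsto (L := fun _ => 0) (Eventually.of_forall fun k =>
    hexact.tendsto_integral_comp_iterate_mul_of_memLp hT hinf hf2
      ((htrunc k).memLp_two_of_abs_le (ae_of_all _ (abs_truncation_le_bound g k))))
    tendsto_const_nhds

theorem IsExact.tendsto_measure_preimage_iterate_inter (hexact : IsExact μ T)
    (hT : MeasurePreserving T μ μ) (hinf : μ Set.univ = ⊤) {A B : Set X}
    (hA : MeasurableSet A) (hB : MeasurableSet B) (hμA : μ A ≠ ⊤) (hμB : μ B ≠ ⊤) :
    Tendsto (fun n => μ (T^[n] ⁻¹' A ∩ B)) atTop (𝓝 0) := by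
  have hfin : ∀ n, μ (T^[n] ⁻¹' A ∩ B) ≠ ⊤ := fun n =>
    ne_top_of_le_ne_top hμB (measure_mono Set.inter_subset_right)
  have hind : ∀ {S : Set X}, MeasurableSet S → μ S ≠ ⊤ →
      Integrable (S.indicator (1 : X → ℝ)) μ :=
    fun hS hμS => (integrable_indicator_iff hS).2 (integrableOn_const hμS)
  rw [← ENNReal.tendsto_toReal_iff hfin ENNReal.zero_ne_top, ENNReal.toReal_zero]
  refine (hexact.tendsto_integral_comp_iterate_mul hT hinf (hind hA hμA) (C := 1) (fun x => ?_)
    (hind hB hμB)).congr fun n => ?_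
  · by_cases hx : x ∈ A <;> simp [hx]
  · rw [← measureReal_def, ← integral_indicator_one ((hT.measurable.iterate n hA).inter hB),
      Set.inter_indicator_one]
    rfl

end ZeroType

theorem exact_implies_LLM_general
    {X : Type*} [m : MeasurableSpace X] (μ : Measure X)
    (T : X → X) (hT : MeasurePreserving T μ μ)
    (hinf : μ Set.univ = ⊤)
    -- exactness
    (hexact : ∀ A : Set X,
      (∀ n : ℕ, MeasurableSet[MeasurableSpace.comap (T^[n]) m] A) →
      μ A = 0 ∨ μ Aᶜ = 0) :
    (∀ f : X → ℝ, Integrable f μ → Measurable f → (∃ C, ∀ x, |f x| ≤ C) →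
      ∀ g : X → ℝ, Integrable g μ →
      Tendsto (fun n : ℕ => ∫ x, f (T^[n] x) * g x ∂μ) atTop (nhds 0)) ∧
    (∀ A B : Set X, MeasurableSet A → MeasurableSet B → μ A < ⊤ → μ B < ⊤ →
      Tendsto (fun n : ℕ => μ (T^[n] ⁻¹' A ∩ B)) atTop (nhds 0)) := by
  have hexact : IsExact μ T := hexact
  exact ⟨fun f hf _ ⟨C, hC⟩ g hg => hexact.tendsto_integral_comp_iterate_mul hT hinf hf hC hg,
    fun A B hA hB hμA hμB =>
      hexact.tendsto_measure_preimage_iterate_inter hT hinf hA hB hμA.ne hμB.ne⟩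

/-- Theorem 3.3(b): If the measure-preserving system is exact, with `μ`
σ-finite, `μ(X) = ∞` and `𝒜` nontrivial mod `μ`, then for every `f ∈ L¹ ∩ L^∞` and
every `g ∈ L¹`, `∫(f∘Tⁿ)·g dμ → 0`; in particular `μ(T⁻ⁿA ∩ B) → 0` for all
finite-measure sets `A, B` (zero type). -/
theorem exact_implies_LLM
    {X : Type*} [m : MeasurableSpace X] (μ : Measure X) [SigmaFinite μ]
    (T : X → X) (hT : MeasurePreserving T μ μ)
    (hinf : μ Set.univ = ⊤)
    (hnontriv : ∃ A : Set X, MeasurableSet A ∧ μ A ≠ 0 ∧ μ Aᶜ ≠ 0)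
    -- exactness
    (hexact : ∀ A : Set X,
      (∀ n : ℕ, MeasurableSet[MeasurableSpace.comap (T^[n]) m] A) →
      μ A = 0 ∨ μ Aᶜ = 0) :
    (∀ f : X → ℝ, Integrable f μ → Measurable f → (∃ C, ∀ x, |f x| ≤ C) →
      ∀ g : X → ℝ, Integrable g μ →
      Tendsto (fun n : ℕ => ∫ x, f (T^[n] x) * g x ∂μ) atTop (nhds 0)) ∧
    (∀ A B : Set X, MeasurableSet A → MeasurableSet B → μ A < ⊤ → μ B < ⊤ →
      Tendsto (fun n : ℕ => μ (T^[n] ⁻¹' A ∩ B)) atTop (nhds 0)) :=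
  exact_implies_LLM_general (m := m) μ T hT hinf hexact
end

section
/- Let (X, 𝒜, μ, T) be a σ-finite measure-preserving system with observable structure (𝒱, 𝒢, ℒ) such that Avg(F) exists for all F ∈ 𝒢 and 1 ∈ 𝒢. Suppose there exist nonnegative functions (ψ_j)_{j∈ℕ} on X and finite sets J_V ⊂ ℕ for each V ∈ 𝒱 such that: (i) for every G ∈ 𝒢 and j, G·ψ_j ∈ ℒ; (ii) ‖ Σ_{j∈J_V} ψ_j − 1_V ‖₁ = o(μ(V)) as μ(V) → ∞. If the system satisfies (GLM3) — i.e., for every F ∈ 𝒢, sup_{g ∈ ℒ, g≠0} ‖g‖₁⁻¹ |∫(F∘Tⁿ)g dμ − Avg(F)∫g dμ| → 0 as n → ∞ — then it satisfies (GGM2): for all F, G ∈ 𝒢, lim_{μ(V)→∞, n→∞} (1/μ(V))∫_V (F∘Tⁿ)G dμ = Avg(F)·Avg(G). -/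
/-!
Put `s := ∑_{j ∈ J_V} ψ_j`, so that `1_V = s + (1_V - s)`. Against `s`, the integral of
`(F ∘ Tⁿ - Avg F) G` splits into the pieces `G ψ_j ∈ ℒ`; by (GLM3) each is at most `η ∫ |G| ψ_j`,
and since `ψ_j ≥ 0` they add up to `η ‖G‖∞ ∫ s ≤ η ‖G‖∞ (μ V + ‖s - 1_V‖₁)`. Against `1_V - s` the
integral is at most `‖(F ∘ Tⁿ - Avg F) G‖∞ ‖s - 1_V‖₁ = o(μ V)`. Hence
`∫_V (F ∘ Tⁿ) G = Avg F ∫_V G + o(μ V)`, uniformly once `n` is large, and `∫_V G / μ V → Avg G`.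
-/

open MeasureTheory Filter Topology

theorem abs_sub_mul_le_of_abs_le {u v a C D : ℝ} (hu : |u| ≤ C) (hv : |v| ≤ D) :
    |(u - a) * v| ≤ (C + |a|) * D := by
  rw [abs_mul]
  exact mul_le_mul ((abs_sub _ _).trans (by linarith)) hv (abs_nonneg _)
    (by linarith [abs_nonneg u, abs_nonneg a])

theorem abs_div_sub_mul_le {I K m a b : ℝ} (hm : 0 < m) :
    |I / m - a * b| ≤ |I - a * K| / m + |a| * |K / m - b| := by
  have h : I / m - a * b = (I - a * K) / m + a * (K / m - b) := by
    field_simp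
    ring
  rw [h]
  exact (abs_add_le _ _).trans_eq (by rw [abs_div, abs_of_pos hm, abs_mul])

theorem exists_pos_lt_of_continuous {g : ℝ → ℝ} (hg : Continuous g) (h0 : g 0 = 0)
    {ε : ℝ} (hε : 0 < ε) : ∃ t > 0, g t < ε := by
  have hlim : Tendsto g (𝓝[>] 0) (𝓝 0) := (hg.tendsto' 0 0 h0).mono_left nhdsWithin_le_nhds
  obtain ⟨t, htε, ht⟩ := ((hlim.eventually (gt_mem_nhds hε)).and self_mem_nhdsWithin).exists
  exact ⟨t, ht, htε⟩

section

variable {X : Type*} [MeasurableSpace X] {μ : Measure X} {V : Set X}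

theorem MeasureTheory.Integrable.bdd_mul_of_abs_le {φ g : X → ℝ} {C : ℝ} (hg : Integrable g μ)
    (hφ : AEStronglyMeasurable φ μ) (hφC : ∀ x, |φ x| ≤ C) : Integrable (fun x => φ x * g x) μ :=
  hg.bdd_mul hφ (ae_of_all _ fun x => (Real.norm_eq_abs _).trans_le (hφC x))

theorem abs_integral_mul_le_of_abs_le {φ u : X → ℝ} {C : ℝ} (hC : ∀ x, |φ x| ≤ C)
    (hu : Integrable u μ) : |∫ x, φ x * u x ∂μ| ≤ C * ∫ x, |u x| ∂μ := by
  rw [← Real.norm_eq_abs, ← integral_const_mul]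
  refine norm_integral_le_of_norm_le (hu.abs.const_mul C) (ae_of_all _ fun x => ?_)
  rw [Real.norm_eq_abs, abs_mul]
  exact mul_le_mul_of_nonneg_right (hC x) (abs_nonneg _)

theorem integral_le_measure_add_integral_abs_sub_indicator {s : X → ℝ} (hV : MeasurableSet V)
    (hμV : μ V ≠ ⊤) (hs : Integrable s μ) :
    ∫ x, s x ∂μ ≤ (μ V).toReal + ∫ x, |s x - V.indicator (fun _ => (1 : ℝ)) x| ∂μ := by
  have he : Integrable (V.indicator fun _ => (1 : ℝ)) μ :=
    (integrableOn_const hμV).integrable_indicator hV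
  calc ∫ x, s x ∂μ
      = ∫ x, V.indicator (fun _ => (1 : ℝ)) x ∂μ
        + ∫ x, (s x - V.indicator (fun _ => (1 : ℝ)) x) ∂μ := by
        rw [integral_sub hs he]; ring
    _ ≤ (μ V).toReal + ∫ x, |s x - V.indicator (fun _ => (1 : ℝ)) x| ∂μ := by
        rw [integral_indicator_const _ hV, smul_eq_mul, mul_one]
        exact add_le_add_right ((le_abs_self _).trans abs_integral_le_integral_abs) _

theorem setIntegral_eq_integral_mul_indicator_one (hV : MeasurableSet V)
    (h : X → ℝ) : ∫ x in V, h x ∂μ = ∫ x, h x * V.indicator (fun _ => (1 : ℝ)) x ∂μ := by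
  rw [← integral_indicator hV]
  congr with x
  by_cases hx : x ∈ V <;> simp [hx]

variable {f G : X → ℝ} {a CF CG : ℝ}

theorem setIntegral_mul_sub_mul_setIntegral_eq {s : X → ℝ} (hV : MeasurableSet V)
    (hμV : μ V ≠ ⊤) (hf : AEStronglyMeasurable f μ) (hfC : ∀ x, |f x| ≤ CF)
    (hG : AEStronglyMeasurable G μ) (hGC : ∀ x, |G x| ≤ CG) (hs : Integrable s μ) :
    (∫ x in V, f x * G x ∂μ) - a * ∫ x in V, G x ∂μ
      = (∫ x, (f x - a) * G x * s x ∂μ)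
        - ∫ x, (f x - a) * G x * (s x - V.indicator (fun _ => (1 : ℝ)) x) ∂μ := by
  set e := V.indicator fun _ => (1 : ℝ)
  have he : Integrable e μ := (integrableOn_const hμV).integrable_indicator hV
  have hφ : AEStronglyMeasurable (fun x => (f x - a) * G x) μ :=
    (hf.sub aestronglyMeasurable_const).mul hG
  have hφC (x : X) := abs_sub_mul_le_of_abs_le (a := a) (hfC x) (hGC x)
  have hφe : ∫ x, f x * G x * e x ∂μ
      = (∫ x, (f x - a) * G x * e x ∂μ) + a * ∫ x, G x * e x ∂μ := by
    rw [← integral_const_mul, ← integral_add (he.bdd_mul_of_abs_le hφ hφC)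
      ((he.bdd_mul_of_abs_le hG hGC).const_mul a)]
    congr with x
    ring
  have hsφ : (∫ x, (f x - a) * G x * s x ∂μ) - ∫ x, (f x - a) * G x * (s x - e x) ∂μ
      = ∫ x, (f x - a) * G x * e x ∂μ := by
    rw [← integral_sub (hs.bdd_mul_of_abs_le hφ hφC)
      ((hs.sub he).bdd_mul_of_abs_le (g := fun x => s x - e x) hφ hφC)]
    congr with x
    ring
  rw [setIntegral_eq_integral_mul_indicator_one hV, setIntegral_eq_integral_mul_indicator_one hV,
    hφe, hsφ]
  ring

variable {ψ : ℕ → X → ℝ} {J : Finset ℕ} {η : ℝ}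

theorem abs_integral_sub_mul_mul_sum_le (hf : AEStronglyMeasurable f μ) (hfC : ∀ x, |f x| ≤ CF)
    (hG : AEStronglyMeasurable G μ) (hGC : ∀ x, |G x| ≤ CG)
    (hψ_nonneg : ∀ j x, 0 ≤ ψ j x) (hψ_int : ∀ j, Integrable (ψ j) μ) (hη : 0 ≤ η)
    (hloc : ∀ j ∈ J, |(∫ x, f x * (G x * ψ j x) ∂μ) - a * ∫ x, G x * ψ j x ∂μ|
      ≤ η * ∫ x, |G x * ψ j x| ∂μ) :
    |∫ x, (f x - a) * G x * ∑ j ∈ J, ψ j x ∂μ| ≤ η * CG * ∫ x, ∑ j ∈ J, ψ j x ∂μ := by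
  have hGψ (j : ℕ) : Integrable (fun x => G x * ψ j x) μ :=
    (hψ_int j).bdd_mul_of_abs_le hG hGC
  have hfGψ (j : ℕ) : Integrable (fun x => f x * (G x * ψ j x)) μ :=
    (hGψ j).bdd_mul_of_abs_le hf hfC
  have hsplit (j : ℕ) : ∫ x, (f x - a) * G x * ψ j x ∂μ
      = (∫ x, f x * (G x * ψ j x) ∂μ) - a * ∫ x, G x * ψ j x ∂μ := by
    rw [← integral_const_mul, ← integral_sub (hfGψ j) ((hGψ j).const_mul a)]
    congr 1 with x
    ring
  have habs (j : ℕ) : ∫ x, |G x * ψ j x| ∂μ ≤ CG * ∫ x, ψ j x ∂μ := by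
    rw [← integral_const_mul]
    refine integral_mono (hGψ j).abs ((hψ_int j).const_mul CG) fun x => ?_
    rw [abs_mul, abs_of_nonneg (hψ_nonneg j x)]
    exact mul_le_mul_of_nonneg_right (hGC x) (hψ_nonneg j x)
  calc |∫ x, (f x - a) * G x * ∑ j ∈ J, ψ j x ∂μ|
      = |∑ j ∈ J, ∫ x, (f x - a) * G x * ψ j x ∂μ| := by
        simp_rw [Finset.mul_sum]
        rw [integral_finsetSum]
        exact fun j _ => (hfGψ j).sub ((hGψ j).const_mul a) |>.congr
          (ae_of_all _ fun x => by simp only [Pi.sub_apply]; ring)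
    _ ≤ ∑ j ∈ J, η * ∫ x, |G x * ψ j x| ∂μ :=
        (Finset.abs_sum_le_sum_abs _ _).trans
          (Finset.sum_le_sum fun j hj => (hsplit j).symm ▸ hloc j hj)
    _ ≤ ∑ j ∈ J, η * (CG * ∫ x, ψ j x ∂μ) :=
        Finset.sum_le_sum fun j _ => mul_le_mul_of_nonneg_left (habs j) hη
    _ = η * CG * ∫ x, ∑ j ∈ J, ψ j x ∂μ := by
        rw [integral_finsetSum _ fun j _ => hψ_int j, Finset.mul_sum]
        simp_rw [mul_assoc]

theorem abs_setIntegral_mul_sub_mul_setIntegral_le (hV : MeasurableSet V) (hμV : μ V ≠ ⊤)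
    (hf : AEStronglyMeasurable f μ) (hfC : ∀ x, |f x| ≤ CF)
    (hG : AEStronglyMeasurable G μ) (hGC : ∀ x, |G x| ≤ CG) (hCG : 0 ≤ CG)
    (hψ_nonneg : ∀ j x, 0 ≤ ψ j x) (hψ_int : ∀ j, Integrable (ψ j) μ) (hη : 0 ≤ η)
    (hloc : ∀ j ∈ J, |(∫ x, f x * (G x * ψ j x) ∂μ) - a * ∫ x, G x * ψ j x ∂μ|
      ≤ η * ∫ x, |G x * ψ j x| ∂μ) :
    |(∫ x in V, f x * G x ∂μ) - a * ∫ x in V, G x ∂μ|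
      ≤ η * CG * ((μ V).toReal + ∫ x, |∑ j ∈ J, ψ j x - V.indicator (fun _ => (1 : ℝ)) x| ∂μ)
        + (CF + |a|) * CG * ∫ x, |∑ j ∈ J, ψ j x - V.indicator (fun _ => (1 : ℝ)) x| ∂μ := by
  have hs : Integrable (fun x => ∑ j ∈ J, ψ j x) μ := integrable_finsetSum _ fun j _ => hψ_int j
  have he : Integrable (V.indicator fun _ => (1 : ℝ)) μ :=
    (integrableOn_const hμV).integrable_indicator hV
  rw [setIntegral_mul_sub_mul_setIntegral_eq hV hμV hf hfC hG hGC hs]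
  refine (abs_sub _ _).trans ?_
  gcongr ?_ + ?_
  · refine (abs_integral_sub_mul_mul_sum_le hf hfC hG hGC hψ_nonneg hψ_int hη hloc).trans ?_
    gcongr
    exact integral_le_measure_add_integral_abs_sub_indicator hV hμV hs
  · exact abs_integral_mul_le_of_abs_le (fun x => abs_sub_mul_le_of_abs_le (hfC x) (hGC x))
      (hs.sub he)

theorem abs_setAverage_mul_sub_mul_le {b δ δ' : ℝ} (hV : MeasurableSet V) (hμV : μ V ≠ ⊤)
    (hm : 0 < (μ V).toReal) (hf : AEStronglyMeasurable f μ) (hfC : ∀ x, |f x| ≤ CF)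
    (hCF : 0 ≤ CF) (hG : AEStronglyMeasurable G μ) (hGC : ∀ x, |G x| ≤ CG) (hCG : 0 ≤ CG)
    (hψ_nonneg : ∀ j x, 0 ≤ ψ j x) (hψ_int : ∀ j, Integrable (ψ j) μ) (hη : 0 ≤ η)
    (hloc : ∀ j ∈ J, |(∫ x, f x * (G x * ψ j x) ∂μ) - a * ∫ x, G x * ψ j x ∂μ|
      ≤ η * ∫ x, |G x * ψ j x| ∂μ)
    (hpart : ∫ x, |∑ j ∈ J, ψ j x - V.indicator (fun _ => (1 : ℝ)) x| ∂μ ≤ δ * (μ V).toReal)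
    (hG_avg : |(∫ x in V, G x ∂μ) / (μ V).toReal - b| ≤ δ') :
    |(∫ x in V, f x * G x ∂μ) / (μ V).toReal - a * b|
      ≤ η * CG * (1 + δ) + (CF + |a|) * CG * δ + |a| * δ' := by
  have hI : |(∫ x in V, f x * G x ∂μ) - a * ∫ x in V, G x ∂μ|
      ≤ (η * CG * (1 + δ) + (CF + |a|) * CG * δ) * (μ V).toReal := by
    refine (abs_setIntegral_mul_sub_mul_setIntegral_le hV hμV hf hfC hG hGC hCG hψ_nonneg hψ_int
      hη hloc).trans ?_
    calc _ ≤ η * CG * ((μ V).toReal + δ * (μ V).toReal) + (CF + |a|) * CG * (δ * (μ V).toReal) := by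
          gcongr
      _ = _ := by ring
  calc _ ≤ _ := abs_div_sub_mul_le (K := ∫ x in V, G x ∂μ) hm
    _ ≤ _ := add_le_add ((div_le_iff₀ hm).2 hI) (mul_le_mul_of_nonneg_left hG_avg (abs_nonneg _))

end

theorem GLM3_implies_GGM2_general
    {X : Type*} [MeasurableSpace X] (μ : Measure X)
    (T : X → X) (hT : MeasurePreserving T μ μ)
    (𝒱 : Set (Set X)) (h𝒱 : ∀ V ∈ 𝒱, MeasurableSet V ∧ μ V < ⊤)
    (𝒢 : Set (X → ℝ)) (ℒ : Set (X → ℝ))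
    (h𝒢 : ∀ F ∈ 𝒢, Measurable F ∧ ∃ C, ∀ x, |F x| ≤ C)
    (h𝒢const : (fun _ : X => (1 : ℝ)) ∈ 𝒢)
    (hℒ : ∀ g ∈ ℒ, Integrable g μ)
    (Avg : (X → ℝ) → ℝ)
    (hAvg : ∀ F ∈ 𝒢, ∀ ε > 0, ∃ M : ℝ, ∀ V ∈ 𝒱, M ≤ (μ V).toReal →
      |(∫ x in V, F x ∂μ) / (μ V).toReal - Avg F| ≤ ε)
    (ψ : ℕ → X → ℝ) (J : Set X → Finset ℕ)
    -- (i) nonnegativity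
    (hψpos : ∀ j : ℕ, ∀ x, 0 ≤ ψ j x)
    -- (ii) G·ψ_j is a local observable
    (hGψ : ∀ G ∈ 𝒢, ∀ j : ℕ, (fun x => G x * ψ j x) ∈ ℒ)
    -- (iii) ‖Σ_{j∈J_V} ψ_j − 1_V‖₁ = o(μ(V)) as μ(V) → ∞
    (hpart : ∀ ε > 0, ∃ M : ℝ, ∀ V ∈ 𝒱, M ≤ (μ V).toReal →
      (∫ x, |(∑ j ∈ J V, ψ j x) - V.indicator (fun _ => (1 : ℝ)) x| ∂μ)
        ≤ ε * (μ V).toReal)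
    -- (GLM3)
    (hGLM3 : ∀ F ∈ 𝒢, ∀ ε > 0, ∃ N : ℕ, ∀ n ≥ N, ∀ g ∈ ℒ,
      |(∫ x, F (T^[n] x) * g x ∂μ) - Avg F * (∫ x, g x ∂μ)|
        ≤ ε * (∫ x, |g x| ∂μ)) :
    -- (GGM2)
    ∀ F ∈ 𝒢, ∀ G ∈ 𝒢,
      ∀ ε > 0, ∃ M : ℝ, ∀ V ∈ 𝒱, ∀ n : ℕ, M ≤ (μ V).toReal → M ≤ (n : ℝ) →
        |(∫ x in V, F (T^[n] x) * G x ∂μ) / (μ V).toReal - Avg F * Avg G| ≤ ε := by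
  intro F hF G hG ε hε
  have hbound (H : X → ℝ) (hH : H ∈ 𝒢) : ∃ C, 0 ≤ C ∧ ∀ x, |H x| ≤ C :=
    let ⟨C, hC⟩ := (h𝒢 H hH).2
    ⟨|C|, abs_nonneg C, fun x => (hC x).trans (le_abs_self C)⟩
  obtain ⟨CF, hCF0, hCF⟩ := hbound F hF
  obtain ⟨CG, hCG0, hCG⟩ := hbound G hG
  have hψ_int (j : ℕ) : Integrable (ψ j) μ := by simpa using hℒ _ (hGψ _ h𝒢const j)
  -- the error bound of `abs_setAverage_mul_sub_mul_le` for `η = δ = δ' = t`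
  obtain ⟨t, ht, htε⟩ := exists_pos_lt_of_continuous
    (g := fun t => t * CG * (1 + t) + (CF + |Avg F|) * CG * t + |Avg F| * t)
    (by fun_prop) (by simp) hε
  obtain ⟨M₁, hM₁⟩ := hpart t ht
  obtain ⟨N, hN⟩ := hGLM3 F hF t ht
  obtain ⟨M₂, hM₂⟩ := hAvg G hG t ht
  refine ⟨max 1 (max M₁ (max M₂ N)), fun V hV n hVM hnM => ?_⟩
  simp only [max_le_iff] at hVM hnM
  obtain ⟨hm, hVM₁, hVM₂, -⟩ := hVM
  have hnN : n ≥ N := by exact_mod_cast hnM.2.2.2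
  refine (abs_setAverage_mul_sub_mul_le (f := fun x => F (T^[n] x)) (h𝒱 V hV).1
    (h𝒱 V hV).2.ne (one_pos.trans_le hm)
    ((h𝒢 F hF).1.comp (hT.iterate n).measurable).aestronglyMeasurable (fun x => hCF _) hCF0
    (h𝒢 G hG).1.aestronglyMeasurable hCG hCG0 hψpos hψ_int ht.le
    (fun j _ => hN n hnN _ (hGψ G hG j)) (hM₁ V hV hVM₁) (hM₂ V hV hVM₂)).trans htε.le

/-- Proposition 2.4: Given a partition-of-unity structure `(ψ_j)`,
`(J_V)` adapted to `(𝒱, 𝒢, ℒ)`, (GLM3) implies (GGM2). -/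
theorem GLM3_implies_GGM2
    {X : Type*} [MeasurableSpace X] (μ : Measure X) [SigmaFinite μ]
    (T : X → X) (hT : MeasurePreserving T μ μ)
    (𝒱 : Set (Set X)) (h𝒱 : ∀ V ∈ 𝒱, MeasurableSet V ∧ μ V < ⊤)
    (𝒢 : Set (X → ℝ)) (ℒ : Set (X → ℝ))
    (h𝒢 : ∀ F ∈ 𝒢, Measurable F ∧ ∃ C, ∀ x, |F x| ≤ C)
    (h𝒢const : (fun _ : X => (1 : ℝ)) ∈ 𝒢)
    (hℒ : ∀ g ∈ ℒ, Integrable g μ)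
    (Avg : (X → ℝ) → ℝ)
    (hAvg : ∀ F ∈ 𝒢, ∀ ε > 0, ∃ M : ℝ, ∀ V ∈ 𝒱, M ≤ (μ V).toReal →
      |(∫ x in V, F x ∂μ) / (μ V).toReal - Avg F| ≤ ε)
    (ψ : ℕ → X → ℝ) (J : Set X → Finset ℕ)
    -- (i) nonnegativity
    (hψpos : ∀ j : ℕ, ∀ x, 0 ≤ ψ j x)
    -- (ii) G·ψ_j is a local observable
    (hGψ : ∀ G ∈ 𝒢, ∀ j : ℕ, (fun x => G x * ψ j x) ∈ ℒ)
    -- (iii) ‖Σ_{j∈J_V} ψ_j − 1_V‖₁ = o(μ(V)) as μ(V) → ∞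
    (hpart : ∀ ε > 0, ∃ M : ℝ, ∀ V ∈ 𝒱, M ≤ (μ V).toReal →
      (∫ x, |(∑ j ∈ J V, ψ j x) - V.indicator (fun _ => (1 : ℝ)) x| ∂μ)
        ≤ ε * (μ V).toReal)
    -- (GLM3)
    (hGLM3 : ∀ F ∈ 𝒢, ∀ ε > 0, ∃ N : ℕ, ∀ n ≥ N, ∀ g ∈ ℒ,
      |(∫ x, F (T^[n] x) * g x ∂μ) - Avg F * (∫ x, g x ∂μ)|
        ≤ ε * (∫ x, |g x| ∂μ)) :
    -- (GGM2)
    ∀ F ∈ 𝒢, ∀ G ∈ 𝒢,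
      ∀ ε > 0, ∃ M : ℝ, ∀ V ∈ 𝒱, ∀ n : ℕ, M ≤ (μ V).toReal → M ≤ (n : ℝ) →
        |(∫ x in V, F (T^[n] x) * G x ∂μ) / (μ V).toReal - Avg F * Avg G| ≤ ε :=
  GLM3_implies_GGM2_general μ T hT 𝒱 h𝒱 𝒢 ℒ h𝒢 h𝒢const hℒ Avg hAvg ψ J hψpos hGψ hpart hGLM3
end
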